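/- Let OPT ⊆ P be well-separated. If c, p ∈ OPT are distinct and q ∈ 𝓑(c), then 𝓑(p) ∩ 𝓕(q) = ∅; i.e., the unit ball around any optimal center other than c is disjoint from the flower centered at any point of the unit ball around c. -/

import Mathlib

open scoped Classical

/-- The ball of radius `ρ` around `j` in a finite metric space. -/
noncomputable def bal {P : Type*} [Fintype P] [MetricSpace P] (j : P) (ρ : ℝ) : Finset P :=
  Finset.univ.filter fun i => dist i j ≤ ρ

/-- The flower centered at `j`. -/
noncomputable def flower {P : Type*} [Fintype P] [MetricSpace P] (j : P) : Finset P :=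
  (bal j 1).biUnion fun i => bal i 1

/-- A set `OPT` is well-separated if no ball of radius three covers two unit balls centered
at distinct points of `OPT`. -/
def WellSeparated {P : Type*} [Fintype P] [MetricSpace P] (OPT : Finset P) : Prop :=
  ¬ ∃ (q : P) (c c' : P), c ∈ OPT ∧ c' ∈ OPT ∧ c ≠ c' ∧ bal c 1 ∪ bal c' 1 ⊆ bal q 3

/-! If `x ∈ 𝓑(p)` lies in the petal `𝓑(i)` of `𝓕(q)`, then `i` is within distance two of both
`c` (through `q`) and `p` (through `x`), so `𝓑(i, 3)` covers `𝓑(c) ∪ 𝓑(p)`. -/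

section

variable {P : Type*} [Fintype P] [MetricSpace P]

@[simp]
theorem mem_bal {i j : P} {ρ : ℝ} : i ∈ bal j ρ ↔ dist i j ≤ ρ := by
  simp [bal]

theorem mem_flower {x j : P} : x ∈ flower j ↔ ∃ i, dist i j ≤ 1 ∧ dist x i ≤ 1 := by
  simp [flower]

theorem bal_subset_bal_of_dist_add_le {j q : P} {ρ σ : ℝ} (h : dist j q + ρ ≤ σ) :
    bal j ρ ⊆ bal q σ := fun y hy => by
  rw [mem_bal] at hy ⊢
  linarith [dist_triangle y j q]

theorem WellSeparated.eq_of_bal_subset {OPT : Finset P} (hsep : WellSeparated OPT) {c c' q : P}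
    (hc : c ∈ OPT) (hc' : c' ∈ OPT) (h : bal c 1 ⊆ bal q 3) (h' : bal c' 1 ⊆ bal q 3) :
    c = c' :=
  by_contra fun hne => hsep ⟨q, c, c', hc, hc', hne, Finset.union_subset h h'⟩

end

/-- if `OPT` is well-separated, `c, p ∈ OPT` are distinct and `q ∈ 𝓑(c)`,
then `𝓑(p) ∩ 𝓕(q) = ∅`. -/
theorem stmt4 {P : Type*} [Fintype P] [MetricSpace P]
    (OPT : Finset P) (hsep : WellSeparated OPT)
    (c p : P) (hc : c ∈ OPT) (hp : p ∈ OPT) (hne : c ≠ p)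
    (q : P) (hq : q ∈ bal c 1) :
    bal p 1 ∩ flower q = ∅ := by
  refine Finset.eq_empty_of_forall_notMem fun x hx => hne ?_
  obtain ⟨hxp, hxq⟩ := Finset.mem_inter.mp hx
  obtain ⟨i, hiq, hxi⟩ := mem_flower.mp hxq
  rw [mem_bal] at hxp hq
  refine hsep.eq_of_bal_subset (q := i) hc hp ?_ ?_ <;> apply bal_subset_bal_of_dist_add_le
  · linarith [dist_triangle c q i, dist_comm q c, dist_comm i q]
  · linarith [dist_triangle p x i, dist_comm p x]
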